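/- arXiv:2111.08160 — 2 statements merged into one kernel-verified Lean document; each statement's English description precedes it below -/
import Mathlib

section
/- Let g : U → ℝ be a real analytic function on an open connected set U ⊆ ℝᵐ. If g is not identically zero on U, then the zero set {x ∈ U : g(x) = 0} has Lebesgue measure zero. -/
/-!
Along a line, the zeros of an analytic function that is not identically zero are isolated,
hence null. Near a zero `x`, the function does not vanish identically (identity theorem), so it
is nonzero on a small ball around some nearby `y`; translating by `y - x` moves a small ball
around `x` into that ball, so every line of direction `y - x` through the small ball around `x`
carries a nonzero value, and Fubini along that direction shows the zeros near `x` form a null set.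
-/

open MeasureTheory Metric Filter Topology

theorem AnalyticOnNhd.measure_zeros_eq_zero_of_field {𝕜 F : Type*} [NontriviallyNormedField 𝕜]
    [MeasurableSpace 𝕜] [SecondCountableTopology 𝕜] [NormedAddCommGroup F] [NormedSpace 𝕜 F]
    {μ : Measure 𝕜} [NullSingletonClass μ] {f : 𝕜 → F} {U : Set 𝕜} (hf : AnalyticOnNhd 𝕜 f U)
    (hU : IsPreconnected U) (hUm : MeasurableSet U) (hne : ∃ x ∈ U, f x ≠ 0) :
    μ {x ∈ U | f x = 0} = 0 := by
  obtain ⟨x, hx, hfx⟩ := hne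
  have hcod := (hf.eqOn_zero_or_eventually_ne_zero_of_preconnected hU).resolve_left
    fun h ↦ hfx (h hx)
  have hae : ∀ᵐ y ∂μ.restrict U, f y ≠ 0 := ae_restrict_le_codiscreteWithin hUm hcod
  rw [ae_iff, Measure.restrict_apply' hUm, Set.inter_comm] at hae
  simp only [ne_eq, not_not] at hae
  exact hae

section FiniteDimensional

variable {E F : Type*} [NormedAddCommGroup E] [NormedSpace ℝ E]
  [NormedAddCommGroup F] [NormedSpace ℝ F] {f : E → F}

theorem measure_eq_zero_of_forall_volume_line_eq_zero [FiniteDimensional ℝ E] [MeasurableSpace E]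
    [BorelSpace E] (μ : Measure E) [μ.IsAddHaarMeasure] {S : Set E} (hS : MeasurableSet S) (v : E)
    (h : ∀ p, volume {t : ℝ | p + t • v ∈ S} = 0) : μ S = 0 := by
  refine measure_eq_zero_iff_ae_notMem.mpr <| ae_mem_of_ae_add_linearMap_mem
    ((LinearMap.id : ℝ →ₗ[ℝ] ℝ).smulRight v) volume μ hS.compl fun p ↦ ?_
  exact measure_eq_zero_iff_ae_notMem.mp (h p)

theorem AnalyticOnNhd.volume_line_zeros_eq_zero {C : Set E} (hf : AnalyticOnNhd ℝ f C)
    (hC : Convex ℝ C) (hCo : IsOpen C) {p v : E} {t₀ : ℝ} (ht₀ : p + t₀ • v ∈ C)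
    (hft₀ : f (p + t₀ • v) ≠ 0) : volume {t : ℝ | p + t • v ∈ C ∧ f (p + t • v) = 0} = 0 := by
  have hline : (fun t : ℝ ↦ p + t • v) = AffineMap.lineMap p (p + v) := by
    ext t; simp [AffineMap.lineMap_apply_module', add_comm]
  have hJ : Convex ℝ ((fun t : ℝ ↦ p + t • v) ⁻¹' C) := hline ▸ hC.affine_preimage _
  have hJo : IsOpen ((fun t : ℝ ↦ p + t • v) ⁻¹' C) := hCo.preimage (by fun_prop)
  have hfline : AnalyticOnNhd ℝ (fun t : ℝ ↦ f (p + t • v)) ((fun t : ℝ ↦ p + t • v) ⁻¹' C) :=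
    hf.comp (analyticOnNhd_const.add (analyticOnNhd_id.smul analyticOnNhd_const))
      (Set.mapsTo_preimage _ _)
  exact hfline.measure_zeros_eq_zero_of_field hJ.isPreconnected hJo.measurableSet ⟨t₀, ht₀, hft₀⟩

variable [FiniteDimensional ℝ E] [MeasurableSpace E] [BorelSpace E] (μ : Measure E)
  [μ.IsAddHaarMeasure]

theorem AnalyticOnNhd.exists_measure_closedBall_zeros_eq_zero {U : Set E}
    (hf : AnalyticOnNhd ℝ f U) (hU : IsOpen U) {x : E} (hx : x ∈ U)
    (hfx : ∃ᶠ z in 𝓝 x, f z ≠ 0) : ∃ δ > 0, μ {z ∈ closedBall x δ | f z = 0} = 0 := by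
  obtain ⟨r, hr, hrU⟩ := isOpen_iff.mp hU x hx
  obtain ⟨y, hfy, hyx⟩ := (hfx.and_eventually (ball_mem_nhds x (half_pos hr))).exists
  obtain ⟨η, hη, hfη⟩ := Metric.eventually_nhds_iff.mp ((hf y (hrU (ball_subset_ball
    (half_le_self hr.le) hyx))).continuousAt.eventually_ne hfy)
  set δ := min (η / 2) (r / 4)
  have hδ : 0 < δ := by positivity
  have hδη : δ < η := (min_le_left _ _).trans_lt (half_lt_self hη)
  have hδr : δ + dist y x < r := by
    linarith [min_le_right (η / 2) (r / 4), mem_ball.mp hyx]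
  have hδr' : δ < r := by linarith [dist_nonneg (x := y) (y := x)]
  have hS : IsClosed {z ∈ closedBall x δ | f z = 0} :=
    (hf.continuousOn.mono ((closedBall_subset_ball hδr').trans hrU)).preimage_isClosed_of_isClosed
      isClosed_closedBall isClosed_singleton
  refine ⟨δ, hδ, measure_eq_zero_of_forall_volume_line_eq_zero μ hS.measurableSet (y - x)
    fun p ↦ ?_⟩
  rcases Set.eq_empty_or_nonempty {t : ℝ | p + t • (y - x) ∈ {z ∈ closedBall x δ | f z = 0}}
    with hempty | ⟨t₁, ht₁, -⟩
  · rw [hempty, measure_empty]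
  have hnear : dist (p + (t₁ + 1) • (y - x)) y = dist (p + t₁ • (y - x)) x := by
    rw [dist_eq_norm, dist_eq_norm]; congr 1; module
  have hsub : {t : ℝ | p + t • (y - x) ∈ {z ∈ closedBall x δ | f z = 0}} ⊆
      {t : ℝ | p + t • (y - x) ∈ ball x r ∧ f (p + t • (y - x)) = 0} := by
    rintro t ⟨ht, hft⟩
    exact ⟨closedBall_subset_ball hδr' ht, hft⟩
  refine measure_mono_null hsub <| (hf.mono hrU).volume_line_zeros_eq_zero (convex_ball x r)
    isOpen_ball (t₀ := t₁ + 1) ?_ (hfη (hnear ▸ (mem_closedBall.mp ht₁).trans_lt hδη))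
  exact mem_ball.mpr ((dist_triangle _ y x).trans_lt (by linarith [mem_closedBall.mp ht₁]))

theorem AnalyticOnNhd.measure_zeros_eq_zero {U : Set E} (hf : AnalyticOnNhd ℝ f U)
    (hU : IsOpen U) (hUc : IsPreconnected U) (hne : ∃ x ∈ U, f x ≠ 0) :
    μ {x ∈ U | f x = 0} = 0 := by
  obtain ⟨x₀, hx₀, hfx₀⟩ := hne
  refine measure_null_of_locally_null _ ?_
  rintro x ⟨hx, -⟩
  have hfx : ∃ᶠ z in 𝓝 x, f z ≠ 0 := fun hev ↦ hfx₀ <|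
    hf.eqOn_zero_of_preconnected_of_eventuallyEq_zero hUc hx (by simpa [EventuallyEq] using hev) hx₀
  obtain ⟨δ, hδ, hnull⟩ := hf.exists_measure_closedBall_zeros_eq_zero μ hU hx hfx
  refine ⟨_, inter_mem_nhdsWithin _ (closedBall_mem_nhds x hδ), measure_mono_null ?_ hnull⟩
  rintro z ⟨⟨-, hz⟩, hzδ⟩
  exact ⟨hzδ, hz⟩

end FiniteDimensional

theorem analytic_zero_set_measure_zero {m : ℕ} {U : Set (EuclideanSpace ℝ (Fin m))}
    (hU : IsOpen U) (hc : IsConnected U) {g : EuclideanSpace ℝ (Fin m) → ℝ}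
    (hg : AnalyticOn ℝ g U) (hne : ∃ x ∈ U, g x ≠ 0) :
    volume {x ∈ U | g x = 0} = 0 :=
  (hU.analyticOn_iff_analyticOnNhd.mp hg).measure_zeros_eq_zero volume hU hc.isPreconnected hne
end

section
/- Let σ be an n×n signature matrix and (c,d) an optimal solution of Pryce's ILP with optimal value δ = Σdⱼ − Σcᵢ. Consider the augmented (n+r)×(n+r) signature matrix σ̄ of the IIR-augmented system, whose entries satisfy: σ̄ᵢⱼ ≤ dⱼ for 1 ≤ i ≤ r, 1 ≤ j ≤ n; σ̄ᵢⱼ = −∞ for 1 ≤ i ≤ r, n+1 ≤ j ≤ n+r; σ̄ᵢⱼ ≤ dⱼ − 1 for r+1 ≤ i ≤ n+r, 1 ≤ j ≤ n; and σ̄ᵢⱼ ≤ 0 for r+1 ≤ i ≤ n+r, n+1 ≤ j ≤ n+r. Then the vector pair c̄ = (0,…,0, 1,…,1) (r zeros then n ones) and d̄ = (d₁,…,dₙ, 1,…,1) (r trailing ones) is feasible for the ILP of σ̄, and hence the optimal value δ(σ̄) ≤ Σⱼ dⱼ − (n − r). -/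
open Finset

theorem Fin.sum_dite_val_lt_eq_sum_add_nsmul {M : Type*} [AddCommMonoid M] {n r : ℕ} (f : Fin n → M)
    (b : M) :
    ∑ j : Fin (n + r), (if hj : (j : ℕ) < n then f ⟨j, hj⟩ else b) = ∑ j, f j + r • b := by
  simp [Fin.sum_univ_add]

theorem Fin.sum_ite_val_lt_eq_nsmul_add_nsmul {M : Type*} [AddCommMonoid M] {n r : ℕ} (a b : M) :
    ∑ i : Fin (n + r), (if (i : ℕ) < r then a else b) = r • a + n • b := by
  rw [Fin.sum_univ_eq_sum_range (fun k => if k < r then a else b), add_comm, sum_range_add,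
    sum_congr rfl fun k hk => if_pos (mem_range.mp hk)]
  simp

theorem iir_augmented_ilp_feasibility_general {n r : ℕ}
    (d : Fin n → ℤ)
    (σbar : Fin (n + r) → Fin (n + r) → WithBot ℤ)
    (h1 : ∀ (i j : Fin (n + r)) (_ : (i : ℕ) < r) (hj : (j : ℕ) < n),
      σbar i j ≤ ((d ⟨j, hj⟩ : ℤ) : WithBot ℤ))
    (h2 : ∀ i j : Fin (n + r), (i : ℕ) < r → n ≤ (j : ℕ) → σbar i j = ⊥)
    (h3 : ∀ (i j : Fin (n + r)) (_ : r ≤ (i : ℕ)) (hj : (j : ℕ) < n),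
      σbar i j ≤ ((d ⟨j, hj⟩ - 1 : ℤ) : WithBot ℤ))
    (h4 : ∀ i j : Fin (n + r), r ≤ (i : ℕ) → n ≤ (j : ℕ) → σbar i j ≤ ((0 : ℤ) : WithBot ℤ))
    (cbar : Fin (n + r) → ℤ) (hcbar : cbar = fun i : Fin (n + r) => if (i : ℕ) < r then (0 : ℤ) else 1)
    (dbar : Fin (n + r) → ℤ)
    (hdbar : dbar = fun j : Fin (n + r) => if hj : (j : ℕ) < n then d ⟨j, hj⟩ else (1 : ℤ)) :
    ((∀ i, 0 ≤ cbar i) ∧ ∀ i j, σbar i j ≤ ((dbar j - cbar i : ℤ) : WithBot ℤ)) ∧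
    (∑ j, dbar j) - (∑ i, cbar i) = (∑ j, d j) - ((n : ℤ) - (r : ℤ)) ∧
    (∀ v : ℤ, IsLeast {v' : ℤ | ∃ c' d' : Fin (n + r) → ℤ,
        (∀ i, 0 ≤ c' i) ∧ (∀ i j, σbar i j ≤ ((d' j - c' i : ℤ) : WithBot ℤ)) ∧
        v' = (∑ j, d' j) - (∑ i, c' i)} v →
      v ≤ (∑ j, d j) - ((n : ℤ) - (r : ℤ))) := by
  have hcbar_nonneg : ∀ i, 0 ≤ cbar i := by
    intro i
    rw [hcbar]
    dsimp only
    split_ifs <;> norm_num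
  have hbound : ∀ i j, σbar i j ≤ ((dbar j - cbar i : ℤ) : WithBot ℤ) := by
    intro i j
    rw [hcbar, hdbar]
    rcases lt_or_ge (i : ℕ) r with hi | hi <;> rcases lt_or_ge (j : ℕ) n with hj | hj
    · simpa [hi, hj] using h1 i j hi hj
    · simp [h2 i j hi hj]
    · simpa [hi.not_gt, hj] using h3 i j hi hj
    · simpa [hi.not_gt, hj.not_gt] using h4 i j hi hj
  have hvalue : (∑ j, dbar j) - (∑ i, cbar i) = (∑ j, d j) - ((n : ℤ) - (r : ℤ)) := by
    rw [hdbar, hcbar, Fin.sum_dite_val_lt_eq_sum_add_nsmul, Fin.sum_ite_val_lt_eq_nsmul_add_nsmul]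
    simp only [nsmul_eq_mul, mul_one, mul_zero, zero_add]
    ring
  exact ⟨⟨hcbar_nonneg, hbound⟩, hvalue,
    fun _ hv => hv.2 ⟨cbar, dbar, hcbar_nonneg, hbound, hvalue.symm⟩⟩

theorem iir_augmented_ilp_feasibility {n r : ℕ} (hrn : r ≤ n)
    (σ : Fin n → Fin n → WithBot ℤ) (c d : Fin n → ℤ)
    (hd1 : ∀ j, 1 ≤ d j) (hc : ∀ i, 0 ≤ c i)
    (hfeas : ∀ i j, σ i j ≤ ((d j - c i : ℤ) : WithBot ℤ))
    (σbar : Fin (n + r) → Fin (n + r) → WithBot ℤ)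
    (h1 : ∀ (i j : Fin (n + r)) (_ : (i : ℕ) < r) (hj : (j : ℕ) < n),
      σbar i j ≤ ((d ⟨j, hj⟩ : ℤ) : WithBot ℤ))
    (h2 : ∀ i j : Fin (n + r), (i : ℕ) < r → n ≤ (j : ℕ) → σbar i j = ⊥)
    (h3 : ∀ (i j : Fin (n + r)) (_ : r ≤ (i : ℕ)) (hj : (j : ℕ) < n),
      σbar i j ≤ ((d ⟨j, hj⟩ - 1 : ℤ) : WithBot ℤ))
    (h4 : ∀ i j : Fin (n + r), r ≤ (i : ℕ) → n ≤ (j : ℕ) → σbar i j ≤ ((0 : ℤ) : WithBot ℤ))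
    (cbar : Fin (n + r) → ℤ) (hcbar : cbar = fun i : Fin (n + r) => if (i : ℕ) < r then (0 : ℤ) else 1)
    (dbar : Fin (n + r) → ℤ)
    (hdbar : dbar = fun j : Fin (n + r) => if hj : (j : ℕ) < n then d ⟨j, hj⟩ else (1 : ℤ)) :
    ((∀ i, 0 ≤ cbar i) ∧ ∀ i j, σbar i j ≤ ((dbar j - cbar i : ℤ) : WithBot ℤ)) ∧
    (∑ j, dbar j) - (∑ i, cbar i) = (∑ j, d j) - ((n : ℤ) - (r : ℤ)) ∧
    (∀ v : ℤ, IsLeast {v' : ℤ | ∃ c' d' : Fin (n + r) → ℤ,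
        (∀ i, 0 ≤ c' i) ∧ (∀ i j, σbar i j ≤ ((d' j - c' i : ℤ) : WithBot ℤ)) ∧
        v' = (∑ j, d' j) - (∑ i, c' i)} v →
      v ≤ (∑ j, d j) - ((n : ℤ) - (r : ℤ))) :=
  iir_augmented_ilp_feasibility_general d σbar h1 h2 h3 h4 cbar hcbar dbar hdbar
end
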